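/- arXiv:1410.3144 — 2 statements merged into one kernel-verified Lean document; each statement's English description precedes it below -/
import Mathlib

section
/- Let M be a dense C-minimal C-structure such that bn(a) ≥ ℵ₀ for every a ∈ T and every branch Br(α) is densely ordered. Let A ⊆ T be a definable antichain. Then the set A₀ := {a ∈ A : a has an immediate predecessor in cl_inf(A)} is finite. -/
namespace CMinPaper

open FirstOrder Language Structure Set

universe u v w

/-! ### The language with a single ternary relation symbol `C` -/

/-- The first-order language whose only symbol is one ternary relation symbol. -/
def cLang : FirstOrder.Language :=
  { Functions := fun _ => Empty
    Relations := fun n => PLift (n = 3) }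

/-- The `cLang`-structure on a set determined by a ternary relation. -/
def cStructure {N : Type w} (R : N → N → N → Prop) : cLang.Structure N where
  funMap := fun f _ => f.elim
  RelMap := fun {n} r v =>
    match n, r, v with
    | _, ⟨rfl⟩, v => R (v 0) (v 1) (v 2)

/-! ### C-sets -/

/-- The axioms (C1)-(C4) of a `C`-set. -/
structure IsCSet {M : Type u} (C : M → M → M → Prop) : Prop where
  c1 : ∀ x y z, C x y z → C x z y
  c2 : ∀ x y z, C x y z → ¬ C y x z
  c3 : ∀ x y z w, C x y z → C w y z ∨ C x w z
  c4 : ∀ x y, x ≠ y → C x y y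

/-- A dense `C`-set: a `C`-set with at least two elements satisfying axiom (D). -/
structure IsDenseCSet {M : Type u} (C : M → M → M → Prop) extends IsCSet C : Prop where
  nontrivial : ∃ x y : M, x ≠ y
  denseAx : ∀ x y : M, x ≠ y → ∃ z, z ≠ y ∧ C x y z

variable {M : Type u}

/-! ### The canonical tree -/

/-- The set `Λ(α,β) = {x | ¬ C(x,α,β)}`. -/
def lamSet (C : M → M → M → Prop) (α β : M) : Set M := {x : M | ¬ C x α β}

/-- The canonical tree `T(M)` of a `C`-set: the collection of all sets `Λ(α,β)`,
ordered by reverse inclusion. -/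
def Node (C : M → M → M → Prop) : Type u := {s : Set M // ∃ α β : M, s = lamSet C α β}

instance {C : M → M → M → Prop} : PartialOrder (Node C) where
  le a b := b.1 ⊆ a.1
  le_refl a := subset_rfl
  le_trans a b c h1 h2 := Set.Subset.trans h2 h1
  le_antisymm a b h1 h2 := Subtype.ext (Set.Subset.antisymm h2 h1)

/-- The node `inf(α,β) = Λ(α,β)` of the canonical tree, coded by the pair `(α,β)`. -/
def node (C : M → M → M → Prop) (α β : M) : Node C := ⟨lamSet C α β, α, β, rfl⟩

/-- The leaf `Λ(α,α) = {α}` of the canonical tree corresponding to `α ∈ M`. -/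
def leafN (C : M → M → M → Prop) (α : M) : Node C := node C α α

/-- A node of the canonical tree is a leaf when it is a singleton. The set `T` of the
paper is the set of nodes which are not leaves. -/
def IsLeaf (C : M → M → M → Prop) (a : Node C) : Prop := ∃ α : M, a.1 = {α}

/-- The branch `Br(α) = {a ∈ T(M) : a ≤ α}` of a point `α ∈ M`. -/
def Br (C : M → M → M → Prop) (α : M) : Set (Node C) := {a : Node C | a ≤ leafN C α}

/-- `IsInfN C a b m` says that `m` is the infimum of the nodes `a` and `b` in `T(M)`. -/
def IsInfN (C : M → M → M → Prop) (a b m : Node C) : Prop :=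
  m ≤ a ∧ m ≤ b ∧ ∀ d : Node C, d ≤ a → d ≤ b → d ≤ m

/-! ### Cones, 0-level sets, intervals, n-level sets -/

/-- The cone `Γ_a(α) = {β ∈ M : a < inf(α,β)}` of `α` at `a`, as a subset of `M`. -/
def coneSet (C : M → M → M → Prop) (a : Node C) (α : M) : Set M :=
  {β : M | a < node C α β}

/-- `s` is a cone at the node `a`. -/
def IsConeAt (C : M → M → M → Prop) (a : Node C) (s : Set M) : Prop :=
  ∃ α : M, a < leafN C α ∧ s = coneSet C a α

/-- `s` is a cone (including `M` itself, the cone at `-∞`). -/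
def IsCone (C : M → M → M → Prop) (s : Set M) : Prop :=
  s = Set.univ ∨ ∃ a : Node C, IsConeAt C a s

/-- The 0-level set `Λ_a`, viewed as a subset of `M`. -/
def lamM (C : M → M → M → Prop) (a : Node C) : Set M := {β : M | a ≤ leafN C β}

/-- `Λ_a(α)`: the 0-level set at `a` with the cone of `α` at `a` removed, in `M`. -/
def lamMinus (C : M → M → M → Prop) (a : Node C) (α : M) : Set M :=
  lamM C a \ coneSet C a α

/-- The cone `Γ_a(b)` of a node `b` at `a`, as a set of leaves:
`{β ∈ M : a < inf(b, β)}`. -/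
def coneSetN (C : M → M → M → Prop) (a b : Node C) : Set M :=
  {β : M | ∃ m : Node C, IsInfN C b (leafN C β) m ∧ a < m}

/-- The interval `(a,b) = Γ_a(b) ∖ Λ_b` in `M`, where `a ∈ T(M) ∪ {-∞}`
(`a = none` is `-∞`). -/
def intervalM (C : M → M → M → Prop) (a : Option (Node C)) (b : Node C) : Set M :=
  (match a with
    | none => Set.univ
    | some a' => coneSetN C a' b) \ lamM C b

/-- An `n`-level set at `a`: `Λ_a` with `n` pairwise distinct cones at `a` removed. -/
def IsNLevelSet (C : M → M → M → Prop) (n : ℕ) (s : Set M) : Prop :=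
  ∃ (a : Node C) (γ : Fin n → Set M), Function.Injective γ ∧
    (∀ i, IsConeAt C a (γ i)) ∧ s = lamM C a \ ⋃ i, γ i

/-! ### 1-cells of `M` -/

/-- The possible types of pieces of a 1-cell. -/
inductive PieceType where
  | point : PieceType
  | cone : PieceType
  | interval : PieceType
  | level : ℕ → PieceType

/-- `s` is a piece of the given type. -/
def IsPiece (C : M → M → M → Prop) : PieceType → Set M → Prop
  | PieceType.point, s => ∃ α : M, s = {α}
  | PieceType.cone, s => IsCone C s
  | PieceType.interval, s => (∃ b : Node C, s = intervalM C none b) ∨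
      (∃ a b : Node C, a < b ∧ s = intervalM C (some a) b)
  | PieceType.level n, s => IsNLevelSet C n s

/-- A 1-cell: a definable subset of `M` which is a finite union of pieces of one single
type among singletons, cones, intervals and `n`-level sets. Here `defin` is the ambient
notion of definable subset of `M`. -/
def IsCell1 (C : M → M → M → Prop) (defin : Set M → Prop) (s : Set M) : Prop :=
  defin s ∧ ∃ (t : PieceType) (k : ℕ) (p : Fin k → Set M),
    (∀ i, IsPiece C t (p i)) ∧ s = ⋃ i, p i

/-! ### Ambient hypotheses on the canonical tree -/

/-- `bn(a) ≥ ℵ₀` for every `a ∈ T`: every non-leaf node has infinitely many cones. -/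
def BranchesInfinite (C : M → M → M → Prop) : Prop :=
  ∀ a : Node C, ¬ IsLeaf C a → {s : Set M | IsConeAt C a s}.Infinite

/-- Every branch `Br(α)` is densely ordered. -/
def BranchesDense (C : M → M → M → Prop) : Prop :=
  ∀ (α : M) (a b : Node C), a ≤ leafN C α → b ≤ leafN C α → a < b →
    ∃ d : Node C, a < d ∧ d < b

/-- A partial function `f` with domain `D` is locally constant when every point of `D` has
a cone around it on which `f` is constant. -/
def LocConstOn (C : M → M → M → Prop) {β : Type*} (D : Set M) (f : M → β) : Prop :=
  ∀ α ∈ D, ∃ Γ : Set M, IsCone C Γ ∧ α ∈ Γ ∧ ∀ x ∈ Γ ∩ D, f x = f α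

/-! ### Definability -/

section Definability

variable (L : FirstOrder.Language.{v, w}) [L.Structure M]

/-- A subset of `M` definable with parameters. -/
def DefinableM (s : Set M) : Prop := Set.Definable₁ (Set.univ : Set M) L s

/-- A subset of the canonical tree is definable when the corresponding set of codes
(a node `inf(β,γ)` being coded by the pair `(β,γ)`) is definable with parameters. -/
def DefinableNodeSet (C : M → M → M → Prop) (S : Set (Node C)) : Prop :=
  Set.Definable (Set.univ : Set M) L {p : Fin 2 → M | node C (p 0) (p 1) ∈ S}

/-- A partial function `f : M → T(M)` with domain `D` is definable when its graph,
with nodes coded by pairs, is definable with parameters. -/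
def DefinablePFunTree (C : M → M → M → Prop) (D : Set M) (f : M → Node C) : Prop :=
  Set.Definable (Set.univ : Set M) L
    {p : Fin 3 → M | p 0 ∈ D ∧ f (p 0) = node C (p 1) (p 2)}

/-- A function `g` defined on a subset `A` of the canonical tree, with values in the
canonical tree, is definable when its graph (on codes) is definable with parameters. -/
def DefinableNodeFun (C : M → M → M → Prop) (A : Set (Node C)) (g : Node C → Node C) :
    Prop :=
  Set.Definable (Set.univ : Set M) L
    {p : Fin 4 → M | node C (p 0) (p 1) ∈ A ∧ g (node C (p 0) (p 1)) = node C (p 2) (p 3)}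

end Definability

/-- `s ⊆ N` is definable by a quantifier-free formula with parameters in the language
containing only the ternary relation interpreted as `R`. -/
def QFCDefinable {N : Type w} (R : N → N → N → Prop) (s : Set N) : Prop :=
  ∃ (k : ℕ) (φ : cLang.BoundedFormula (Fin k) 1) (xs : Fin k → N),
    φ.IsQF ∧ s = {x : N | @BoundedFormula.Realize cLang N (cStructure R) _ _ φ xs (fun _ => x)}

/-- `M` is `C`-minimal (with `C` the interpretation of the relation symbol `c`):
in every elementarily equivalent structure, every subset definable with parameters is
quantifier-free definable using only the relation `C`. -/
def CMinimal (L : FirstOrder.Language.{v, w}) (M : Type u) [L.Structure M]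
    (c : L.Relations 3) : Prop :=
  ∀ (N : Type u) [L.Structure N], (M ≅[L] N) →
    ∀ s : Set N, Set.Definable₁ (Set.univ : Set N) L s →
      QFCDefinable (fun x y z : N => RelMap c ![x, y, z]) s

/-! ### The induced C-relation on an antichain, infima closure -/

/-- The relation `C_A(x,y,z) ↔ inf(y,z) > inf(x,y)` induced on (an antichain of) the
canonical tree. -/
def CInd (C : M → M → M → Prop) (x y z : Node C) : Prop :=
  ∃ m₁ m₂ : Node C, IsInfN C y z m₁ ∧ IsInfN C x y m₂ ∧ m₂ < m₁

/-- The induced `C`-relation, as a ternary relation on an antichain `A`. -/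
def CIndRel (C : M → M → M → Prop) (A : Set (Node C)) : ↥A → ↥A → ↥A → Prop :=
  fun x y z => CInd C x.1 y.1 z.1

/-- The closure `cl_inf(A)` of a subset of the canonical tree under binary infima. -/
inductive InfClosure (C : M → M → M → Prop) (A : Set (Node C)) : Node C → Prop
  | base {a : Node C} : a ∈ A → InfClosure C A a
  | inf {a b m : Node C} : InfClosure C A a → InfClosure C A b → IsInfN C a b m →
      InfClosure C A m

/-- A cone of the `C`-set `(A, C_A)` induced on an antichain `A` (including `A` itself,
the cone at `-∞`): `Γ_{inf(a,b)}(a) = {x ∈ A : C_A(b,x,a)}`. -/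
def ConeInAntichain (C : M → M → M → Prop) (A : Set (Node C)) (S : Set (Node C)) : Prop :=
  S = A ∨ ∃ a ∈ A, ∃ b ∈ A, a ≠ b ∧ S = {x ∈ A | CInd C b x a}

/-! ### Incomparable chains and t-functions -/

/-- A finite set `𝔠` of definable chains of `T` is a set of *incomparable chains* if
(a) elements of distinct chains are incomparable, (b) the antichain
`A = {inf(lp C₀, lp C₁)}` of infima of left endpoints is an antichain on which the
automorphism group of the induced `C`-set acts transitively, and (c) each `a ∈ A` lies
strictly below elements of exactly `k` chains of `𝔠`. -/
def IsIncompChainSet (C : M → M → M → Prop) (defin : Set (Node C) → Prop)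
    (𝔠 : Set (Set (Node C))) : Prop :=
  𝔠.Finite ∧
  (∀ B ∈ 𝔠, IsChain (· ≤ ·) B ∧ defin B) ∧
  (∀ B₁ ∈ 𝔠, ∀ B₂ ∈ 𝔠, B₁ ≠ B₂ → ∀ x ∈ B₁, ∀ y ∈ B₂, ¬ x ≤ y ∧ ¬ y ≤ x) ∧
  ∃ lp : Set (Node C) → WithBot (Node C),
    (∀ B ∈ 𝔠, IsGLB ((fun a : Node C => (a : WithBot (Node C))) '' B) (lp B)) ∧
    ∀ A : Set (Node C),
      (∀ x : Node C, x ∈ A ↔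
        ∃ B₁ ∈ 𝔠, ∃ B₂ ∈ 𝔠, B₁ ≠ B₂ ∧ IsGLB {lp B₁, lp B₂} (x : WithBot (Node C))) →
      IsAntichain (· ≤ ·) A ∧
      (∀ (a : Node C) (ha : a ∈ A) (b : Node C) (hb : b ∈ A), ∃ g : ↥A ≃ ↥A,
        (∀ x y z : ↥A, CIndRel C A x y z ↔ CIndRel C A (g x) (g y) (g z)) ∧
        g ⟨a, ha⟩ = ⟨b, hb⟩) ∧
      ∃ k : ℕ, ∀ a ∈ A, {B ∈ 𝔠 | ∃ x ∈ B, a < x}.ncard = k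

/-- A definable function on a definable antichain `A ⊆ T` is a *t-function* when its
image is an antichain or the union of a finite set of incomparable chains. -/
def IsTFunction (C : M → M → M → Prop) (defin : Set (Node C) → Prop)
    (A : Set (Node C)) (f : Node C → Node C) : Prop :=
  IsAntichain (· ≤ ·) (f '' A) ∨
    ∃ 𝔠 : Set (Set (Node C)), IsIncompChainSet C defin 𝔠 ∧ f '' A = ⋃₀ 𝔠

/-! ### 1-cells of the canonical tree -/

/-- A 1-cell of `T`: the image, or the set of points strictly between the values of,
two definable t-functions `g < f` on a definable antichain `A ⊆ T`. -/
def IsCellT (C : M → M → M → Prop) (definN : Set (Node C) → Prop)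
    (definFun : Set (Node C) → (Node C → Node C) → Prop) (X : Set (Node C)) : Prop :=
  ∃ (A : Set (Node C)) (f g : Node C → Node C),
    definN A ∧ IsAntichain (· ≤ ·) A ∧ (∀ a ∈ A, ¬ IsLeaf C a) ∧
    definFun A f ∧ definFun A g ∧
    IsTFunction C definN A f ∧ IsTFunction C definN A g ∧
    (∀ a ∈ A, ¬ IsLeaf C (f a)) ∧ (∀ a ∈ A, ¬ IsLeaf C (g a)) ∧
    (∀ a ∈ A, g a < f a) ∧
    (X = f '' A ∨ X = {t : Node C | ∃ a ∈ A, g a < t ∧ t < f a})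

/-! ### C-isomorphisms and algebraic closure -/

/-- A function from a subset `S` of `M` to the canonical tree is a `C`-isomorphism on `S`
if it is injective, has antichain image, and transports the relation `C` to the induced
relation `C_A` on the image antichain. -/
def IsCIsoOn (C : M → M → M → Prop) (S : Set M) (f : M → Node C) : Prop :=
  Set.InjOn f S ∧ IsAntichain (· ≤ ·) (f '' S) ∧
    ∀ x ∈ S, ∀ y ∈ S, ∀ z ∈ S, (C x y z ↔ CInd C (f x) (f y) (f z))

/-- `f` is a local `C`-isomorphism on `D`. -/
def LocalCIsoOn (C : M → M → M → Prop) (D : Set M) (f : M → Node C) : Prop :=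
  ∀ α ∈ D, ∃ Γ : Set M, IsCone C Γ ∧ α ∈ Γ ∧ IsCIsoOn C (Γ ∩ D) f

/-- The model-theoretic algebraic closure of `A`: the union of all finite `A`-definable
subsets. -/
def aclSet (L : FirstOrder.Language.{v, w}) (N : Type u) [L.Structure N] (A : Set N) :
    Set N :=
  ⋃₀ {s : Set N | s.Finite ∧ Set.Definable₁ A L s}

/-! ### Intervals of a chain of the canonical tree -/

/-- An interval of a chain `B ⊆ T(M)`: a nonempty convex subset of `B`, open in the
order topology of `B`, which is not a single point. -/
def IsIntervalIn (C : M → M → M → Prop) (B I : Set (Node C)) : Prop :=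
  I ⊆ B ∧ I.Nonempty ∧ (¬ ∃ x, I = {x}) ∧
  (∀ x ∈ I, ∀ y ∈ I, ∀ z ∈ B, x ≤ z → z ≤ y → z ∈ I) ∧
  (∀ x ∈ I,
    ((∀ y ∈ B, ¬ y < x) ∨ ∃ a ∈ B, a < x ∧ ∀ y ∈ B, a < y → y ≤ x → y ∈ I) ∧
    ((∀ y ∈ B, ¬ x < y) ∨ ∃ b ∈ B, x < b ∧ ∀ y ∈ B, x ≤ y → y < b → y ∈ I))

/-- The family of subsets of `T` defined by a formula `φ(t, y)` (given by its set `Φ` of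
codes) at the parameter `α`. -/
def nodeFam (C : M → M → M → Prop) {k : ℕ} (Φ : Set (Fin (2 + k) → M))
    (α : Fin k → M) : Set (Node C) :=
  {x : Node C | ¬ IsLeaf C x ∧ ∃ β γ : M, x = node C β γ ∧ Fin.append ![β, γ] α ∈ Φ}

/-! ### Valued fields -/

/-- `v` is a surjective nontrivial valuation on `K` with value group `Γ`
(written additively, with `v 0 = ⊤`). -/
structure IsValuationOn (K : Type u) [Field K] (Γ : Type v)
    [AddCommGroup Γ] [LinearOrder Γ] [IsOrderedAddMonoid Γ] (v : K → WithTop Γ) : Prop where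
  top_iff : ∀ x : K, v x = ⊤ ↔ x = 0
  map_mul : ∀ x y : K, v (x * y) = v x + v y
  add_min : ∀ x y : K, min (v x) (v y) ≤ v (x + y)
  surj : ∀ g : Γ, ∃ x : K, v x = (g : WithTop Γ)
  nontriv : ∃ x : K, x ≠ 0 ∧ v x ≠ (0 : WithTop Γ)

/-- The canonical `C`-relation of a valued field: `C(x,y,z)` iff `v(y−z) > v(x−z)`. -/
def vC {K : Type u} [Field K] {Γ : Type v} [AddCommGroup Γ] [LinearOrder Γ] [IsOrderedAddMonoid Γ]
    (v : K → WithTop Γ) : K → K → K → Prop :=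
  fun x y z => v (x - z) < v (y - z)

/-- The coset relation `v(x−y) > 0` on the valuation ring, defining the residue field. -/
def resRel {K : Type u} [Field K] {Γ : Type v} [AddCommGroup Γ] [LinearOrder Γ] [IsOrderedAddMonoid Γ]
    (v : K → WithTop Γ) :
    {x : K // (0 : WithTop Γ) ≤ v x} → {x : K // (0 : WithTop Γ) ≤ v x} → Prop :=
  fun a b => (0 : WithTop Γ) < v (a.1 - b.1)

/-- The residue field `K/v`: the valuation ring modulo the coset relation `v(x−y) > 0`. -/
def ResField {K : Type u} [Field K] {Γ : Type v} [AddCommGroup Γ] [LinearOrder Γ] [IsOrderedAddMonoid Γ]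
    (v : K → WithTop Γ) : Type u :=
  Quot (resRel v)

/-- The residue `x/v` of `x ∈ K`: its class in `K/v` when `x` lies in the valuation
ring (and the class of `0` otherwise, as a junk value). -/
noncomputable def resOf {K : Type u} [Field K] {Γ : Type v}
    [AddCommGroup Γ] [LinearOrder Γ] [IsOrderedAddMonoid Γ] {v : K → WithTop Γ}
    (hv : IsValuationOn K Γ v) (x : K) : ResField v := by
  classical
  exact if hx : (0 : WithTop Γ) ≤ v x then Quot.mk _ ⟨x, hx⟩
    else Quot.mk _ ⟨0, by rw [(hv.top_iff 0).mpr rfl]; exact le_top⟩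

/-!
Let `D ⊆ M` be the set of leaves lying above some node of `A`. It is definable, so by
`C`-minimality it is quantifier-free definable from finitely many parameters. If `b` is an
immediate predecessor of `a ∈ A` in `cl_inf(A)` and `α` lies above `a`, then the cone
`Γ_b(α)` meets `D` only above `a`, because for `a' ∈ A` the node `inf(a,a')` belongs to
`cl_inf(A)`. Density of the branch of `α` yields a leaf of `Γ_b(α)` outside `D`, while `α`
is in `D`; a quantifier-free formula can only separate two points of a cone if one of its
parameters lies in that cone. Distinct elements of `A₀` get disjoint such cones, so `A₀` has at
most as many elements as there are parameters.
-/

section CSet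

variable {C : M → M → M → Prop}

theorem IsCSet.not_rel_self_left (h : IsCSet C) (x y : M) : ¬ C x x y :=
  fun hc => h.c2 _ _ _ hc hc

theorem IsCSet.not_rel_self_right (h : IsCSet C) (x y : M) : ¬ C x y x :=
  fun hc => h.not_rel_self_left x y (h.c1 _ _ _ hc)

theorem IsCSet.rel_of_not_rel (h : IsCSet C) {x y z w : M} (hc : C x y z) (hw : ¬ C w y z) :
    C x w z :=
  (h.c3 x y z w hc).resolve_left hw

theorem IsCSet.mem_lamSet_left (h : IsCSet C) (α β : M) : α ∈ lamSet C α β :=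
  h.not_rel_self_left α β

theorem IsCSet.mem_lamSet_right (h : IsCSet C) (α β : M) : β ∈ lamSet C α β :=
  h.not_rel_self_right β α

theorem IsCSet.lamSet_self (h : IsCSet C) (α : M) : lamSet C α α = {α} := by
  ext x
  refine ⟨fun hx => ?_, fun hx => ?_⟩
  · by_contra hne
    exact hx (h.c4 x α hne)
  · rw [Set.mem_singleton_iff.mp hx]
    exact h.mem_lamSet_left α α

theorem IsCSet.lamSet_subset (h : IsCSet C) {α β x y : M} (hx : x ∈ lamSet C α β)
    (hy : y ∈ lamSet C α β) : lamSet C x y ⊆ lamSet C α β := by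
  intro u hu hcon
  by_cases hyx : C y β x
  · have hxy : ¬ C x β y := fun hxy => h.c2 _ _ _ (h.c1 _ _ _ hxy) (h.c1 _ _ _ hyx)
    exact hu (h.rel_of_not_rel (h.c1 _ _ _ (h.rel_of_not_rel hcon hy)) hxy)
  · exact hu (h.c1 _ _ _ (h.rel_of_not_rel (h.c1 _ _ _ (h.rel_of_not_rel hcon hx)) hyx))

theorem IsCSet.lamSet_total_of_left (h : IsCSet C) (α y y' : M) :
    lamSet C α y ⊆ lamSet C α y' ∨ lamSet C α y' ⊆ lamSet C α y := by
  by_cases hy : C y α y'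
  · refine Or.inr (h.lamSet_subset (h.mem_lamSet_left α y) fun hy' => ?_)
    exact h.c2 _ _ _ (h.c1 _ _ _ hy) (h.c1 _ _ _ hy')
  · exact Or.inl (h.lamSet_subset (h.mem_lamSet_left α y') hy)

theorem IsCSet.lamSet_eq_of_mem (h : IsCSet C) {α β u : M} (hu : u ∈ lamSet C α β) :
    lamSet C α β = lamSet C u α ∨ lamSet C α β = lamSet C u β := by
  by_cases hβ : C β u α
  · have hα : ¬ C α u β := fun hα => h.c2 _ _ _ (h.c1 _ _ _ hα) (h.c1 _ _ _ hβ)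
    exact Or.inr <| (h.lamSet_subset hα (h.mem_lamSet_right u β)).antisymm
      (h.lamSet_subset hu (h.mem_lamSet_right α β))
  · exact Or.inl <| (h.lamSet_subset (h.mem_lamSet_right u α) hβ).antisymm
      (h.lamSet_subset hu (h.mem_lamSet_left α β))

theorem IsCSet.lamSet_total_of_mem (h : IsCSet C) {α β γ δ u : M} (h₁ : u ∈ lamSet C α β)
    (h₂ : u ∈ lamSet C γ δ) : lamSet C α β ⊆ lamSet C γ δ ∨ lamSet C γ δ ⊆ lamSet C α β := by
  rcases h.lamSet_eq_of_mem h₁ with e₁ | e₁ <;> rcases h.lamSet_eq_of_mem h₂ with e₂ | e₂ <;>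
    rw [e₁, e₂] <;> exact h.lamSet_total_of_left u _ _

end CSet

section Tree

variable {C : M → M → M → Prop}

theorem Node.le_iff_subset {a b : Node C} : a ≤ b ↔ b.1 ⊆ a.1 := Iff.rfl

theorem Node.lt_iff_ssubset {a b : Node C} : a < b ↔ b.1 ⊂ a.1 := by
  rw [lt_iff_le_not_ge, Set.ssubset_def, Node.le_iff_subset, Node.le_iff_subset]

theorem IsCSet.node_nonempty (h : IsCSet C) (a : Node C) : a.1.Nonempty := by
  obtain ⟨α, β, ha⟩ := a.2
  exact ⟨α, ha ▸ h.mem_lamSet_left α β⟩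

theorem IsCSet.le_leafN_iff (h : IsCSet C) {a : Node C} {α : M} : a ≤ leafN C α ↔ α ∈ a.1 := by
  rw [Node.le_iff_subset, leafN, node, Subtype.coe_mk, h.lamSet_self, Set.singleton_subset_iff]

theorem IsCSet.le_total_of_mem (h : IsCSet C) {a b : Node C} {u : M} (ha : u ∈ a.1)
    (hb : u ∈ b.1) : a ≤ b ∨ b ≤ a := by
  obtain ⟨α, β, hab⟩ := a.2
  obtain ⟨γ, δ, hcd⟩ := b.2
  rw [hab] at ha
  rw [hcd] at hb
  rw [Node.le_iff_subset, Node.le_iff_subset, hab, hcd]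
  exact (h.lamSet_total_of_mem ha hb).symm

theorem IsCSet.le_node_of_mem (h : IsCSet C) {a : Node C} {x y : M} (hx : x ∈ a.1)
    (hy : y ∈ a.1) : a ≤ node C x y := by
  obtain ⟨α, β, hab⟩ := a.2
  rw [hab] at hx hy
  rw [Node.le_iff_subset, hab]
  exact h.lamSet_subset hx hy

theorem IsCSet.exists_isInfN (h : IsCSet C) (a b : Node C) : ∃ m : Node C, IsInfN C a b m := by
  by_cases hab : a.1 ⊆ b.1
  · exact ⟨b, hab, le_rfl, fun d _ hd => hd⟩
  by_cases hba : b.1 ⊆ a.1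
  · exact ⟨a, le_rfl, hba, fun d hd _ => hd⟩
  obtain ⟨u, hua, hub⟩ := Set.not_subset.mp hab
  obtain ⟨w, hwb, hwa⟩ := Set.not_subset.mp hba
  refine ⟨node C u w, ?_, ?_, fun d hda hdb => h.le_node_of_mem (hda hua) (hdb hwb)⟩
  · refine (h.le_total_of_mem (b := node C u w) hua (h.mem_lamSet_left u w)).resolve_left ?_
    exact fun hle => hwa (hle (h.mem_lamSet_right u w))
  · refine (h.le_total_of_mem (b := node C u w) hwb (h.mem_lamSet_right u w)).resolve_left ?_
    exact fun hle => hub (hle (h.mem_lamSet_left u w))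

theorem IsCSet.eq_of_mem_of_mem {A : Set (Node C)} (h : IsCSet C) (hanti : IsAntichain (· ≤ ·) A)
    {a a' : Node C} (ha : a ∈ A) (ha' : a' ∈ A) {u : M} (hu : u ∈ a.1) (hu' : u ∈ a'.1) :
    a = a' :=
  (h.le_total_of_mem hu hu').elim (hanti.eq ha ha') (hanti.eq' ha ha')

end Tree

section Cones

variable {C : M → M → M → Prop}

/-- `Γ` behaves as a single point for atomic `C`-formulas with parameters outside `Γ`;
cones are the example that matters. -/
def IsCBlock (C : M → M → M → Prop) (Γ : Set M) : Prop :=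
  ∀ p ∉ Γ, ∀ w ∈ Γ, ∀ w' ∈ Γ, C p w w'

theorem mem_coneSet_iff {b : Node C} {α y : M} : y ∈ coneSet C b α ↔ lamSet C α y ⊂ b.1 :=
  Node.lt_iff_ssubset

theorem mem_coneSet_of_lamSet_subset {b : Node C} {α y z : M} (hy : y ∈ coneSet C b α)
    (hz : lamSet C α z ⊆ lamSet C α y) : z ∈ coneSet C b α :=
  mem_coneSet_iff.mpr (ssubset_of_subset_of_ssubset hz (mem_coneSet_iff.mp hy))

theorem IsCSet.isCBlock_coneSet (h : IsCSet C) (b : Node C) (α : M) :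
    IsCBlock C (coneSet C b α) := by
  intro p hp w hw w' hw'
  by_contra hpww'
  apply hp
  rcases h.lamSet_total_of_left α w w' with hsub | hsub
  · refine mem_coneSet_of_lamSet_subset hw' (h.lamSet_subset (h.mem_lamSet_left α w') ?_)
    exact h.lamSet_subset (hsub (h.mem_lamSet_right α w)) (h.mem_lamSet_right α w') hpww'
  · refine mem_coneSet_of_lamSet_subset hw (h.lamSet_subset (h.mem_lamSet_left α w) ?_)
    exact h.lamSet_subset (h.mem_lamSet_right α w) (hsub (h.mem_lamSet_right α w')) hpww'

theorem IsCSet.mem_coneSet_of_mem_coneSet (h : IsCSet C) {b b' : Node C} {α α' x : M}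
    (hx : x ∈ coneSet C b α) (hx' : x ∈ coneSet C b' α') :
    α ∈ coneSet C b' α' ∨ α' ∈ coneSet C b α := by
  rcases h.lamSet_total_of_mem (h.mem_lamSet_right α x) (h.mem_lamSet_right α' x) with hs | hs
  · exact Or.inl <| mem_coneSet_of_lamSet_subset hx'
      (h.lamSet_subset (h.mem_lamSet_left α' x) (hs (h.mem_lamSet_left α x)))
  · exact Or.inr <| mem_coneSet_of_lamSet_subset hx
      (h.lamSet_subset (h.mem_lamSet_left α x) (hs (h.mem_lamSet_left α' x)))

end Cones

section QuantifierFree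

variable {C : M → M → M → Prop}

theorem cLang_term_eq_var {γ : Type*} (t : cLang.Term γ) : ∃ i, t = Term.var i := by
  cases t with
  | var i => exact ⟨i, rfl⟩
  | func f _ => exact Empty.elim f

theorem IsCSet.rel_sumElim_of_isCBlock {k : ℕ} (h : IsCSet C) {Γ : Set M} (hΓ : IsCBlock C Γ)
    {z z' : M} (hz : z ∈ Γ) (hz' : z' ∈ Γ) {xs : Fin k → M} (hxs : ∀ i, xs i ∉ Γ)
    (i₀ i₁ i₂ : Fin k ⊕ Fin 1)
    (hr : C (Sum.elim xs (fun _ => z) i₀) (Sum.elim xs (fun _ => z) i₁)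
      (Sum.elim xs (fun _ => z) i₂)) :
    C (Sum.elim xs (fun _ => z') i₀) (Sum.elim xs (fun _ => z') i₁)
      (Sum.elim xs (fun _ => z') i₂) := by
  have hfar : ∀ j, ¬ C z' z (xs j) :=
    fun j hc => h.c2 _ _ _ (h.c1 _ _ _ (hΓ _ (hxs j) _ hz _ hz')) (h.c1 _ _ _ hc)
  rcases i₀ with j₀ | j₀ <;> rcases i₁ with j₁ | j₁ <;> rcases i₂ with j₂ | j₂ <;>
    simp only [Sum.elim_inl, Sum.elim_inr] at hr ⊢
  · exact hr
  · exact h.c1 _ _ _ (h.rel_of_not_rel (h.c1 _ _ _ hr) (hfar j₁))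
  · exact h.rel_of_not_rel hr (hfar j₂)
  · exact h.c4 _ _ fun e => hxs j₀ (Set.mem_of_eq_of_mem e hz')
  · refine (h.c3 _ (xs j₁) (xs j₂) z' hr).resolve_right fun h' => ?_
    exact h.c2 _ _ _ (h.c1 _ _ _ h') (hΓ _ (hxs j₂) _ hz _ hz')
  · exact absurd hr (h.not_rel_self_right _ _)
  · exact absurd hr (h.not_rel_self_left _ _)
  · exact absurd hr (h.not_rel_self_left _ _)

theorem IsCSet.realize_iff_of_isCBlock {k : ℕ} (h : IsCSet C) {Γ : Set M} (hΓ : IsCBlock C Γ)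
    {z z' : M} (hz : z ∈ Γ) (hz' : z' ∈ Γ) {xs : Fin k → M} (hxs : ∀ i, xs i ∉ Γ)
    {φ : cLang.BoundedFormula (Fin k) 1} (hqf : φ.IsQF) :
    @BoundedFormula.Realize cLang M (cStructure C) _ _ φ xs (fun _ => z) ↔
      @BoundedFormula.Realize cLang M (cStructure C) _ _ φ xs (fun _ => z') := by
  let _ : cLang.Structure M := cStructure C
  induction hqf with
  | falsum => exact Iff.rfl
  | imp _ _ ih₁ ih₂ => exact imp_congr ih₁ ih₂
  | of_isAtomic hatom =>
    cases hatom with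
    | equal t₁ t₂ =>
      obtain ⟨i₁, rfl⟩ := cLang_term_eq_var t₁
      obtain ⟨i₂, rfl⟩ := cLang_term_eq_var t₂
      show Sum.elim xs (fun _ => z) i₁ = Sum.elim xs (fun _ => z) i₂ ↔
        Sum.elim xs (fun _ => z') i₁ = Sum.elim xs (fun _ => z') i₂
      rcases i₁ with j₁ | j₁ <;> rcases i₂ with j₂ | j₂
      · exact Iff.rfl
      · exact iff_of_false (fun e => hxs j₁ (Set.mem_of_eq_of_mem e hz))
          (fun e => hxs j₁ (Set.mem_of_eq_of_mem e hz'))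
      · exact iff_of_false (fun e => hxs j₂ (Set.mem_of_eq_of_mem e.symm hz))
          (fun e => hxs j₂ (Set.mem_of_eq_of_mem e.symm hz'))
      · exact iff_of_true rfl rfl
    | rel R ts =>
      obtain ⟨rfl⟩ := R
      obtain ⟨i₀, h₀⟩ := cLang_term_eq_var (ts 0)
      obtain ⟨i₁, h₁⟩ := cLang_term_eq_var (ts 1)
      obtain ⟨i₂, h₂⟩ := cLang_term_eq_var (ts 2)
      show C ((ts 0).realize (Sum.elim xs fun _ => z)) ((ts 1).realize (Sum.elim xs fun _ => z))
          ((ts 2).realize (Sum.elim xs fun _ => z)) ↔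
        C ((ts 0).realize (Sum.elim xs fun _ => z')) ((ts 1).realize (Sum.elim xs fun _ => z'))
          ((ts 2).realize (Sum.elim xs fun _ => z'))
      rw [h₀, h₁, h₂]
      exact ⟨h.rel_sumElim_of_isCBlock hΓ hz hz' hxs i₀ i₁ i₂,
        h.rel_sumElim_of_isCBlock hΓ hz' hz hxs i₀ i₁ i₂⟩

end QuantifierFree

section Definability

variable {L : FirstOrder.Language.{v, w}} [L.Structure M] {C : M → M → M → Prop}

/-- The leaves `α ∈ M` whose branch `Br(α)` meets `A`. -/
def leavesAbove (C : M → M → M → Prop) (A : Set (Node C)) : Set M := {x | ∃ a ∈ A, x ∈ a.1}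

theorem definable_rel (c : L.Relations 3) (hC : ∀ x y z : M, C x y z ↔ RelMap c ![x, y, z]) :
    Set.Definable (Set.univ : Set M) L {p : Fin 3 → M | C (p 0) (p 1) (p 2)} := by
  refine Set.Definable.mono ?_ (Set.empty_subset _)
  refine Set.empty_definable_iff.mpr ⟨Relations.formula c ![Term.var 0, Term.var 1, Term.var 2], ?_⟩
  ext p
  rw [Set.mem_ofPred_eq, Set.mem_ofPred_eq, Formula.realize_rel, hC]
  refine iff_of_eq (congrArg (RelMap c) ?_)
  funext i
  fin_cases i <;> rfl

theorem definable_leavesAbove (c : L.Relations 3)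
    (hC : ∀ x y z : M, C x y z ↔ RelMap c ![x, y, z]) {A : Set (Node C)}
    (hA : DefinableNodeSet L C A) : DefinableM L (leavesAbove C A) := by
  have hcodes : Set.Definable (Set.univ : Set M) L
      {p : Fin 3 → M | node C (p 1) (p 2) ∈ A ∧ ¬ C (p 0) (p 1) (p 2)} :=
    (hA.preimage_comp ![1, 2]).inter (definable_rel c hC).compl
  have hproj := hcodes.image_comp ![0]
  have himage : (fun p : Fin 3 → M => p ∘ ![0]) ''
      {p : Fin 3 → M | node C (p 1) (p 2) ∈ A ∧ ¬ C (p 0) (p 1) (p 2)} =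
      {x : Fin 1 → M | x 0 ∈ leavesAbove C A} := by
    ext x
    constructor
    · rintro ⟨p, ⟨hpA, hpC⟩, rfl⟩
      exact ⟨_, hpA, hpC⟩
    · rintro ⟨a, ha, hx⟩
      obtain ⟨β, γ, rfl⟩ : ∃ β γ, a = node C β γ :=
        let ⟨β, γ, e⟩ := a.2; ⟨β, γ, Subtype.ext e⟩
      refine ⟨![x 0, β, γ], ⟨ha, hx⟩, ?_⟩
      funext i
      fin_cases i
      rfl
  rw [himage] at hproj
  exact hproj

theorem CMinimal.qfCDefinable {c : L.Relations 3} (hmin : CMinimal L M c)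
    (hC : ∀ x y z : M, C x y z ↔ RelMap c ![x, y, z]) {s : Set M} (hs : DefinableM L s) :
    QFCDefinable C s := by
  have hCeq : (fun x y z : M => RelMap c ![x, y, z]) = C :=
    funext fun x => funext fun y => funext fun z => propext (hC x y z).symm
  exact hCeq ▸ hmin M (elementarilyEquivalent_iff.mpr fun _ => Iff.rfl) s hs

end Definability

section ImmediatePredecessor

variable {C : M → M → M → Prop} {A : Set (Node C)}

/-- If `y ∈ a' ∈ A` with `a' ≠ a`, then `inf(a,a') ∈ cl_inf(A)` would lie strictly between
`b` and `a`. -/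
theorem IsCSet.mem_of_mem_coneSet_of_mem_leavesAbove (h : IsCSet C)
    (hanti : IsAntichain (· ≤ ·) A) {a b : Node C} (haA : a ∈ A)
    (hmax : ¬ ∃ d : Node C, InfClosure C A d ∧ b < d ∧ d < a) {α y : M} (hα : α ∈ a.1)
    (hy : y ∈ coneSet C b α) (hyA : y ∈ leavesAbove C A) : y ∈ a.1 := by
  obtain ⟨a', ha'A, hya'⟩ := hyA
  rcases h.le_total_of_mem (b := node C α y) hα (h.mem_lamSet_left α y) with hle | hle
  · exact hle (h.mem_lamSet_right α y)
  suffices a' = a from this ▸ hya'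
  rcases h.le_total_of_mem (b := node C α y) hya' (h.mem_lamSet_right α y) with hle' | hle'
  · exact hanti.eq ha'A haA (hle'.trans hle)
  obtain ⟨m, hm⟩ := h.exists_isInfN a a'
  have hbm : b < m := lt_of_lt_of_le hy (hm.2.2 _ hle hle')
  have hma : m = a := hm.1.eq_of_not_lt fun hlt =>
    hmax ⟨m, .inf (.base haA) (.base ha'A) hm, hbm, hlt⟩
  exact (hanti.eq haA ha'A (hma ▸ hm.2.1)).symm

theorem IsCSet.exists_param_mem_coneSet (h : IsCSet C) (hbd : BranchesDense C)
    (hanti : IsAntichain (· ≤ ·) A) {k : ℕ} {φ : cLang.BoundedFormula (Fin k) 1}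
    (hqf : φ.IsQF) {xs : Fin k → M}
    (hD : leavesAbove C A =
      {x | @BoundedFormula.Realize cLang M (cStructure C) _ _ φ xs fun _ => x})
    {a b : Node C} (haA : a ∈ A) (hba : b < a)
    (hmax : ¬ ∃ d : Node C, InfClosure C A d ∧ b < d ∧ d < a) {α : M} (hα : α ∈ a.1) :
    ∃ i, xs i ∈ coneSet C b α := by
  obtain ⟨d, hbd', hda⟩ := hbd α b a (h.le_leafN_iff.mpr (hba.le hα)) (h.le_leafN_iff.mpr hα) hba
  obtain ⟨y, hyd, hya⟩ := Set.exists_of_ssubset (Node.lt_iff_ssubset.mp hda)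
  have hyΓ : y ∈ coneSet C b α := lt_of_lt_of_le hbd' (h.le_node_of_mem (hda.le hα) hyd)
  have hαΓ : α ∈ coneSet C b α := mem_coneSet_of_lamSet_subset hyΓ <| by
    rw [h.lamSet_self, Set.singleton_subset_iff]
    exact h.mem_lamSet_left α y
  have hyD : y ∉ leavesAbove C A :=
    fun hyD => hya (h.mem_of_mem_coneSet_of_mem_leavesAbove hanti haA hmax hα hyΓ hyD)
  by_contra! hxs
  have hαD : α ∈ leavesAbove C A := ⟨a, haA, hα⟩
  rw [hD] at hαD hyD
  exact hyD ((h.realize_iff_of_isCBlock (h.isCBlock_coneSet b α) hαΓ hyΓ hxs hqf).mp hαD)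

theorem IsCSet.finite_of_forall_exists_coneSet (h : IsCSet C) (hanti : IsAntichain (· ≤ ·) A)
    {S : Set (Node C)} (hSA : S ⊆ A) {P : Set M} (hP : P.Finite)
    (hS : ∀ a ∈ S, ∃ α ∈ a.1, ∃ b : Node C, ∃ x ∈ P, x ∈ coneSet C b α ∧
      coneSet C b α ∩ leavesAbove C A ⊆ a.1) :
    S.Finite := by
  choose α hα b x hxP hx hsub using fun a : S => hS a a.2
  have := hP.to_subtype
  refine Set.finite_coe_iff.mp (Finite.of_injective (fun a => (⟨x a, hxP a⟩ : P)) ?_)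
  intro a a' hxx
  have hA : ∀ a : S, a.1 ∈ A := fun a => hSA a.2
  have hxa' : x a ∈ coneSet C (b a') (α a') := by
    rw [show x a = x a' from congrArg Subtype.val hxx]
    exact hx a'
  rcases h.mem_coneSet_of_mem_coneSet (hx a) hxa' with hmem | hmem
  · exact Subtype.ext <| h.eq_of_mem_of_mem hanti (hA a) (hA a') (hα a)
      (hsub a' ⟨hmem, a, hA a, hα a⟩)
  · exact Subtype.ext <| h.eq_of_mem_of_mem hanti (hA a) (hA a')
      (hsub a ⟨hmem, a', hA a', hα a'⟩) (hα a')

end ImmediatePredecessor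

theorem statement5_general {M : Type u} {L : FirstOrder.Language.{v, w}} [L.Structure M]
    (c : L.Relations 3) (C : M → M → M → Prop)
    (hC : ∀ x y z : M, C x y z ↔ RelMap c ![x, y, z])
    (hdense : IsDenseCSet C) (hmin : CMinimal L M c)
    (hbd : BranchesDense C)
    (A : Set (Node C))
    (hanti : IsAntichain (· ≤ ·) A)
    (hAdef : DefinableNodeSet L C A) :
    {a ∈ A | ∃ b : Node C, InfClosure C A b ∧ b < a ∧
      ¬ ∃ d : Node C, InfClosure C A d ∧ b < d ∧ d < a}.Finite := by
  have h : IsCSet C := hdense.toIsCSet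
  obtain ⟨k, φ, xs, hqf, hD⟩ := hmin.qfCDefinable hC (definable_leavesAbove c hC hAdef)
  refine h.finite_of_forall_exists_coneSet hanti (fun a ha => ha.1) (Set.finite_range xs) ?_
  rintro a ⟨haA, b, -, hba, hmax⟩
  obtain ⟨α, hα⟩ := h.node_nonempty a
  obtain ⟨i, hi⟩ := h.exists_param_mem_coneSet hbd hanti hqf hD haA hba hmax hα
  exact ⟨α, hα, b, xs i, ⟨i, rfl⟩, hi,
    fun y hy => h.mem_of_mem_coneSet_of_mem_leavesAbove hanti haA hmax hα hy.1 hy.2⟩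

/-- For a definable antichain `A ⊆ T`, the set of elements of `A`
having an immediate predecessor in `cl_inf(A)` is finite. -/
theorem statement5 {M : Type u} {L : FirstOrder.Language.{v, w}} [L.Structure M]
    (c : L.Relations 3) (C : M → M → M → Prop)
    (hC : ∀ x y z : M, C x y z ↔ RelMap c ![x, y, z])
    (hdense : IsDenseCSet C) (hmin : CMinimal L M c)
    (hbn : BranchesInfinite C) (hbd : BranchesDense C)
    (A : Set (Node C)) (hAT : ∀ a ∈ A, ¬ IsLeaf C a)
    (hanti : IsAntichain (· ≤ ·) A)
    (hAdef : DefinableNodeSet L C A) :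
    {a ∈ A | ∃ b : Node C, InfClosure C A b ∧ b < a ∧
      ¬ ∃ d : Node C, InfClosure C A d ∧ b < d ∧ d < a}.Finite :=
  statement5_general c C hC hdense hmin hbd A hanti hAdef

end CMinPaper
end

section
/- Let M be a dense C-minimal C-structure such that bn(a) ≥ ℵ₀ for every a ∈ T and every branch Br(α) is densely ordered. Let A ⊆ T be an infinite antichain and let {Γ_i : i < κ} be an infinite family of pairwise distinct cones satisfying: (1) for all i < κ the basis of Γ_i is an element of A; (2) there is a positive integer N such that for every a ∈ A there are at most N cones in the family whose basis is a. Then H := ⋃{Γ_i : i < κ}, viewed as a subset of M, is not definable. -/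
namespace CMinPaper

open FirstOrder Language Structure Set

universe u v w

variable {M : Type u}

/-!
By `C`-minimality, a definable union `H` of the cones would be quantifier-free definable in
`C` from finitely many parameters. Nodes of the canonical tree are balls: two of them sharing a
point are comparable, so each parameter lies in at most one node of the antichain `A`. Since
infinitely many nodes of `A` carry a cone of the family, one of them, `a`, contains no
parameter. Seen from a point outside it, a ball looks like a single point, so all points of `a`
satisfy the same quantifier-free `C`-formulas over the parameters. But `a` meets `H` (in a
cone of the family) and also its complement (in one of the infinitely many cones at `a` that
are not in the family).
-/

section Proof

variable {M : Type u} {C : M → M → M → Prop}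

namespace IsCSet

theorem not_C_left (h : IsCSet C) (α β : M) : ¬ C α α β :=
  fun hc => h.c2 _ _ _ hc hc

theorem mem_lamSet_left_s7 (h : IsCSet C) (α β : M) : α ∈ lamSet C α β :=
  h.not_C_left α β

theorem mem_lamSet_right_s7 (h : IsCSet C) (α β : M) : β ∈ lamSet C α β :=
  fun hc => h.not_C_left β α (h.c1 _ _ _ hc)

end IsCSet

def IsBall (C : M → M → M → Prop) (S : Set M) : Prop :=
  ∀ q ∉ S, ∀ x ∈ S, ∀ y ∈ S, C q x y

theorem IsCSet.isBall_lamSet (h : IsCSet C) (α β : M) : IsBall C (lamSet C α β) := by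
  intro q hq x hx y hy
  have hq : C q α β := not_not.mp hq
  have hsep : ∀ z ∈ lamSet C α β, C q z α := fun z hz =>
    (h.c3 q β α z (h.c1 _ _ _ hq)).resolve_left fun hz' => hz (h.c1 _ _ _ hz')
  rcases h.c3 q α x y (h.c1 _ _ _ (hsep x hx)) with hyαx | hqyx
  · rcases h.c3 q α y x (h.c1 _ _ _ (hsep y hy)) with hxαy | hqxy
    · exact absurd (h.c1 _ _ _ hyαx) (h.c2 _ _ _ (h.c1 _ _ _ hxαy))
    · exact hqxy
  · exact h.c1 _ _ _ hqyx

namespace IsBall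

variable {S T : Set M} {x y p q : M}

theorem C_of_C_left (h : IsCSet C) (hS : IsBall C S) (hx : x ∈ S) (hy : y ∈ S) (hq : q ∉ S)
    (hxpq : C x p q) : C y p q :=
  (h.c3 x p q y hxpq).resolve_right fun hxyq => h.c2 _ _ _ (hS q hq x hx y hy) (h.c1 _ _ _ hxyq)

theorem C_of_C_middle (h : IsCSet C) (hS : IsBall C S) (hx : x ∈ S) (hy : y ∈ S) (hq : q ∉ S)
    (hpxq : C p x q) : C p y q :=
  (h.c3 p x q y hpxq).resolve_left fun hyxq =>
    h.c2 _ _ _ (h.c1 _ _ _ (hS q hq x hx y hy)) (h.c1 _ _ _ hyxq)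

theorem subset_or_subset (h : IsCSet C) (hS : IsBall C S) (hT : IsBall C T) {z : M}
    (hzS : z ∈ S) (hzT : z ∈ T) : S ⊆ T ∨ T ⊆ S := by
  by_contra! hcon
  obtain ⟨u, huS, huT⟩ := Set.not_subset.mp hcon.1
  obtain ⟨w, hwT, hwS⟩ := Set.not_subset.mp hcon.2
  exact h.c2 _ _ _ (h.c1 _ _ _ (hT u huT z hzT w hwT)) (h.c1 _ _ _ (hS w hwS z hzS u huS))

end IsBall

/-- `u` and `v` are the values of one variable of a formula when its free variable is
interpreted by `x` and by `y` respectively, its parameters lying outside `S`. -/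
def Replaces (S : Set M) (x y u v : M) : Prop :=
  (u = x ∧ v = y) ∨ (u = v ∧ u ∉ S)

namespace Replaces

variable {S : Set M} {x y u v u₀ u₁ u₂ v₀ v₁ v₂ : M}

theorem symm (huv : Replaces S x y u v) : Replaces S y x v u := by
  rcases huv with ⟨rfl, rfl⟩ | ⟨rfl, hu⟩
  exacts [Or.inl ⟨rfl, rfl⟩, Or.inr ⟨rfl, hu⟩]

theorem eq_iff (hx : x ∈ S) (hy : y ∈ S) (h₁ : Replaces S x y u₁ v₁)
    (h₂ : Replaces S x y u₂ v₂) : u₁ = u₂ ↔ v₁ = v₂ := by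
  rcases h₁ with ⟨rfl, rfl⟩ | ⟨rfl, hu₁⟩ <;> rcases h₂ with ⟨rfl, rfl⟩ | ⟨rfl, hu₂⟩
  · exact iff_of_true rfl rfl
  · exact iff_of_false (fun e => hu₂ (e ▸ hx)) (fun e => hu₂ (e ▸ hy))
  · exact iff_of_false (fun e => hu₁ (e ▸ hx)) (fun e => hu₁ (e ▸ hy))
  · exact Iff.rfl

theorem C_of_C (h : IsCSet C) (hS : IsBall C S) (hx : x ∈ S) (hy : y ∈ S)
    (h₀ : Replaces S x y u₀ v₀) (h₁ : Replaces S x y u₁ v₁) (h₂ : Replaces S x y u₂ v₂)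
    (hc : C u₀ u₁ u₂) : C v₀ v₁ v₂ := by
  rcases h₀ with ⟨rfl, rfl⟩ | ⟨rfl, hp₀⟩ <;> rcases h₁ with ⟨rfl, rfl⟩ | ⟨rfl, hp₁⟩ <;>
    rcases h₂ with ⟨rfl, rfl⟩ | ⟨rfl, hp₂⟩
  · exact absurd hc (h.not_C_left _ _)
  · exact absurd hc (h.not_C_left _ _)
  · exact absurd (h.c1 _ _ _ hc) (h.not_C_left _ _)
  · exact hS.C_of_C_left h hx hy hp₂ hc
  · exact h.c4 _ _ fun e => hp₀ (e ▸ hy)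
  · exact hS.C_of_C_middle h hx hy hp₂ hc
  · exact h.c1 _ _ _ (hS.C_of_C_middle h hx hy hp₁ (h.c1 _ _ _ hc))
  · exact hc

end Replaces

theorem cLang.term_eq_var {σ : Type*} (t : cLang.Term σ) : ∃ s, t = Term.var s := by
  cases t with
  | var s => exact ⟨s, rfl⟩
  | func f _ => exact f.elim

theorem cStructure_relMap (R : M → M → M → Prop) (r : cLang.Relations 3) (v : Fin 3 → M) :
    @RelMap cLang M (cStructure R) 3 r v ↔ R (v 0) (v 1) (v 2) := by
  obtain ⟨hr⟩ := r
  exact Iff.rfl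

theorem IsBall.realize_isQF_iff (h : IsCSet C) {S : Set M} (hS : IsBall C S) {x y : M}
    (hx : x ∈ S) (hy : y ∈ S) {ι : Type*} (xs : ι → M) (hxs : ∀ i, xs i ∉ S)
    {φ : cLang.BoundedFormula ι 1} (hφ : φ.IsQF) :
    @BoundedFormula.Realize cLang M (cStructure C) _ _ φ xs (fun _ => x) ↔
      @BoundedFormula.Realize cLang M (cStructure C) _ _ φ xs (fun _ => y) := by
  let _ : cLang.Structure M := cStructure C
  have hvar : ∀ t : cLang.Term (ι ⊕ Fin 1),
      Replaces S x y (t.realize (Sum.elim xs fun _ => x))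
        (t.realize (Sum.elim xs fun _ => y)) := by
    intro t
    obtain ⟨s | _, rfl⟩ := cLang.term_eq_var t
    · exact Or.inr ⟨rfl, hxs s⟩
    · exact Or.inl ⟨rfl, rfl⟩
  induction hφ with
  | falsum => exact Iff.rfl
  | imp _ _ ih₁ ih₂ => exact imp_congr ih₁ ih₂
  | of_isAtomic hA =>
    cases hA with
    | equal t₁ t₂ => exact (hvar t₁).eq_iff hx hy (hvar t₂)
    | @rel l R ts =>
      obtain rfl : l = 3 := R.down
      simp only [BoundedFormula.realize_rel, cStructure_relMap]
      exact ⟨Replaces.C_of_C h hS hx hy (hvar _) (hvar _) (hvar _),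
        Replaces.C_of_C h hS hy hx (hvar _).symm (hvar _).symm (hvar _).symm⟩

namespace Node

theorem isBall (h : IsCSet C) (a : Node C) : IsBall C a.1 := by
  obtain ⟨α, β, ha⟩ := a.2
  exact ha ▸ h.isBall_lamSet α β

theorem le_total_of_mem (h : IsCSet C) {a b : Node C} {z : M} (hza : z ∈ a.1) (hzb : z ∈ b.1) :
    a ≤ b ∨ b ≤ a :=
  ((a.isBall h).subset_or_subset h (b.isBall h) hza hzb).symm

theorem eq_of_mem_of_isAntichain (h : IsCSet C) {A : Set (Node C)}
    (hA : IsAntichain (· ≤ ·) A) {a b : Node C} (ha : a ∈ A) (hb : b ∈ A) {z : M}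
    (hza : z ∈ a.1) (hzb : z ∈ b.1) : a = b := by
  rcases le_total_of_mem h hza hzb with hab | hba
  exacts [hA.eq ha hb hab, hA.eq' ha hb hba]

theorem le_node_of_mem (h : IsCSet C) {n : Node C} {β γ : M} (hβ : β ∈ n.1) (hγ : γ ∈ n.1) :
    n ≤ node C β γ :=
  fun w hw => by_contra fun hwn => hw (n.isBall h w hwn β hβ γ hγ)

end Node

theorem node_comm (h : IsCSet C) (α β : M) : node C α β = node C β α :=
  Subtype.ext <| Set.ext fun _ => not_congr ⟨h.c1 _ _ _, h.c1 _ _ _⟩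

theorem lt_node_of_lt_node (h : IsCSet C) {a : Node C} {α β γ : M}
    (hβ : a < node C α β) (hγ : a < node C α γ) : a < node C β γ := by
  rcases Node.le_total_of_mem (a := node C α β) (b := node C α γ) h (h.mem_lamSet_left_s7 α β)
    (h.mem_lamSet_left_s7 α γ) with hle | hle
  · exact hβ.trans_le
      (Node.le_node_of_mem h (h.mem_lamSet_right_s7 α β) (hle (h.mem_lamSet_right_s7 α γ)))
  · exact hγ.trans_le
      (Node.le_node_of_mem h (hle (h.mem_lamSet_right_s7 α β)) (h.mem_lamSet_right_s7 α γ))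

theorem coneSet_eq_of_mem (h : IsCSet C) {a : Node C} {α γ : M} (hγ : γ ∈ coneSet C a α) :
    coneSet C a γ = coneSet C a α := by
  have hγ' : a < node C γ α := node_comm h α γ ▸ hγ
  ext δ
  exact ⟨lt_node_of_lt_node h hγ', lt_node_of_lt_node h hγ⟩

theorem coneSet_subset (h : IsCSet C) (a : Node C) (α : M) : coneSet C a α ⊆ a.1 :=
  fun z hz => (show a < node C α z from hz).le (h.mem_lamSet_right_s7 α z)

namespace IsConeAt

variable {a : Node C} {s : Set M}

theorem nonempty (hs : IsConeAt C a s) : s.Nonempty := by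
  obtain ⟨α, hα, rfl⟩ := hs
  exact ⟨α, hα⟩

theorem subset (h : IsCSet C) (hs : IsConeAt C a s) : s ⊆ a.1 := by
  obtain ⟨α, -, rfl⟩ := hs
  exact coneSet_subset h a α

theorem eq_coneSet_of_mem (h : IsCSet C) (hs : IsConeAt C a s) {γ : M} (hγ : γ ∈ s) :
    s = coneSet C a γ := by
  obtain ⟨α, -, rfl⟩ := hs
  exact (coneSet_eq_of_mem h hγ).symm

end IsConeAt

variable {A : Set (Node C)} {G : Set (Set M)}

theorem not_mem_sUnion_of_isConeAt (h : IsCSet C) (hA : IsAntichain (· ≤ ·) A)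
    (hbase : ∀ t ∈ G, ∃ b ∈ A, IsConeAt C b t) {a : Node C} (ha : a ∈ A) {s : Set M}
    (hs : IsConeAt C a s) (hsG : s ∉ G) {y : M} (hy : y ∈ s) : y ∉ ⋃₀ G := by
  rintro ⟨t, htG, hyt⟩
  obtain ⟨b, hb, ht⟩ := hbase t htG
  obtain rfl : b = a := Node.eq_of_mem_of_isAntichain h hA hb ha (ht.subset h hyt) (hs.subset h hy)
  exact hsG (by rwa [hs.eq_coneSet_of_mem h hy, ← ht.eq_coneSet_of_mem h hyt])

theorem infinite_bases (hGinf : G.Infinite) (hbase : ∀ s ∈ G, ∃ a ∈ A, IsConeAt C a s)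
    (hfin : ∀ a ∈ A, {s ∈ G | IsConeAt C a s}.Finite) :
    {a ∈ A | ∃ s ∈ G, IsConeAt C a s}.Infinite := fun hB =>
  hGinf <| (hB.biUnion fun a ha => hfin a ha.1).subset fun s hs => by
    obtain ⟨a, ha, hsa⟩ := hbase s hs
    exact Set.mem_biUnion ⟨ha, s, hs, hsa⟩ ⟨hs, hsa⟩

theorem exists_mem_forall_not_mem (h : IsCSet C) (hA : IsAntichain (· ≤ ·) A)
    {B : Set (Node C)} (hBA : B ⊆ A) (hB : B.Infinite) {ι : Type*} [Finite ι] (xs : ι → M) :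
    ∃ a ∈ B, ∀ i, xs i ∉ a.1 := by
  have hsub : ∀ i, {a ∈ A | xs i ∈ a.1}.Subsingleton := fun i a ha b hb =>
    Node.eq_of_mem_of_isAntichain h hA ha.1 hb.1 ha.2 hb.2
  obtain ⟨a, haB, ha⟩ := (hB.sdiff (Set.finite_iUnion fun i => (hsub i).finite)).nonempty
  exact ⟨a, haB, fun i hi => ha (Set.mem_iUnion.2 ⟨i, hBA haB, hi⟩)⟩

end Proof

theorem statement7_general {M : Type u} {L : FirstOrder.Language.{v, w}} [L.Structure M]
    (c : L.Relations 3) (C : M → M → M → Prop)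
    (hC : ∀ x y z : M, C x y z ↔ RelMap c ![x, y, z])
    (hdense : IsDenseCSet C) (hmin : CMinimal L M c)
    (hbn : BranchesInfinite C)
    (A : Set (Node C)) (hAT : ∀ a ∈ A, ¬ IsLeaf C a)
    (hanti : IsAntichain (· ≤ ·) A)
    (G : Set (Set M)) (hGinf : G.Infinite)
    (hbase : ∀ s ∈ G, ∃ a ∈ A, IsConeAt C a s)
    (N : ℕ)
    (hbound : ∀ a ∈ A, {s ∈ G | IsConeAt C a s}.Finite ∧
      {s ∈ G | IsConeAt C a s}.ncard ≤ N) :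
    ¬ DefinableM L (⋃₀ G) := by
  intro hdef
  have h := hdense.toIsCSet
  obtain ⟨k, φ, xs, hφ, hH⟩ : QFCDefinable C (⋃₀ G) := by
    simpa only [← hC] using hmin M rfl (⋃₀ G) hdef
  obtain ⟨a, ⟨haA, s, hsG, hs⟩, hxs⟩ := exists_mem_forall_not_mem h hanti (fun _ hb => hb.1)
    (infinite_bases hGinf hbase fun a ha => (hbound a ha).1) xs
  obtain ⟨s', hs', hs'G⟩ : ∃ s', IsConeAt C a s' ∧ s' ∉ G := by
    obtain ⟨s', hs', hs'G⟩ := ((hbn a (hAT a haA)).sdiff (hbound a haA).1).nonempty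
    exact ⟨s', hs', fun hG => hs'G ⟨hG, hs'⟩⟩
  obtain ⟨x, hx⟩ := hs.nonempty
  obtain ⟨y, hy⟩ := hs'.nonempty
  have hxH : x ∈ ⋃₀ G := ⟨s, hsG, hx⟩
  have hyH : y ∉ ⋃₀ G := not_mem_sUnion_of_isConeAt h hanti hbase haA hs' hs'G hy
  rw [hH] at hxH hyH
  exact hyH (((a.isBall h).realize_isQF_iff h (hs.subset h hx) (hs'.subset h hy) xs hxs hφ).1 hxH)

/-- The union of an infinite family of cones with bases in an infinite
antichain, boundedly many per basis, is not definable. -/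
theorem statement7 {M : Type u} {L : FirstOrder.Language.{v, w}} [L.Structure M]
    (c : L.Relations 3) (C : M → M → M → Prop)
    (hC : ∀ x y z : M, C x y z ↔ RelMap c ![x, y, z])
    (hdense : IsDenseCSet C) (hmin : CMinimal L M c)
    (hbn : BranchesInfinite C) (hbd : BranchesDense C)
    (A : Set (Node C)) (hAT : ∀ a ∈ A, ¬ IsLeaf C a)
    (hanti : IsAntichain (· ≤ ·) A) (hAinf : A.Infinite)
    (G : Set (Set M)) (hGinf : G.Infinite)
    (hbase : ∀ s ∈ G, ∃ a ∈ A, IsConeAt C a s)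
    (N : ℕ) (hN : 0 < N)
    (hbound : ∀ a ∈ A, {s ∈ G | IsConeAt C a s}.Finite ∧
      {s ∈ G | IsConeAt C a s}.ncard ≤ N) :
    ¬ DefinableM L (⋃₀ G) :=
  statement7_general c C hC hdense hmin hbn A hAT hanti G hGinf hbase N hbound

end CMinPaper
end
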